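/- arXiv:1611.07103 — 5 statements merged into one kernel-verified Lean document; each statement's English description precedes it below -/
import Mathlib

section
/- Let F and G be two continuous cumulative distribution functions on ℝ. If for every integer n ≥ 0 we have ∫_ℝ G(t) (F(t))^n dF(t) = 1/(n+2), then G(t) = F(t) for F-almost every t. -/
/-!
A continuous distribution function `F` pushes its own measure forward to the uniform
distribution on `[0, 1]`, so `∫ F ^ (n + 1) dF = 1 / (n + 2)` and `h = G - F` has vanishing
moments `∫ h F ^ n dF = 0`. By Weierstrass approximation `∫ h φ(F) dF = 0` for every continuous
`φ`, and approximating indicators gives `∫ h dF = 0` over every level set `{F ≤ c}`. Up to an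
`F`-null set, `{F ≤ F a}` is the half-line `(-∞, a]`, and an integrable function whose integrals
over all half-lines vanish is zero almost everywhere.
-/

open MeasureTheory Filter Set

lemma Monotone.exists_preimage_Iic_eq_Iic {f : ℝ → ℝ} (hmono : Monotone f)
    (hcont : Continuous f) {x : ℝ} (hle : ∃ t, f t ≤ x) (hlt : ∃ t, x < f t) :
    ∃ b, f b = x ∧ f ⁻¹' Iic x = Iic b := by
  obtain ⟨T, hT⟩ := hlt
  have hbdd : BddAbove (f ⁻¹' Iic x) :=
    ⟨T, fun t ht ↦ (hmono.reflect_lt (lt_of_le_of_lt ht hT)).le⟩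
  have hb : sSup (f ⁻¹' Iic x) ∈ f ⁻¹' Iic x :=
    (isClosed_Iic.preimage hcont).csSup_mem hle hbdd
  obtain ⟨c, hc⟩ := mem_range_of_exists_le_of_exists_ge hcont hle ⟨T, hT.le⟩
  refine ⟨sSup (f ⁻¹' Iic x), le_antisymm hb ?_, ?_⟩
  · calc x = f c := hc.symm
      _ ≤ f (sSup (f ⁻¹' Iic x)) := hmono (le_csSup hbdd (show f c ≤ x from hc.le))
  · exact Subset.antisymm (fun t ht ↦ le_csSup hbdd ht) (fun t ht ↦ (hmono ht).trans hb)

namespace StieltjesFunction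

variable (F : StieltjesFunction ℝ) (hFc : Continuous F) (hF0 : Tendsto F atBot (nhds 0))
  (hF1 : Tendsto F atTop (nhds 1))

include hF0 hF1 in
lemma mem_Icc_of_tendsto (t : ℝ) : F t ∈ Icc 0 1 :=
  ⟨F.mono.le_of_tendsto hF0 t, F.mono.ge_of_tendsto hF1 t⟩

include hFc hF0 hF1 in
lemma measure_preimage_Iic (x : ℝ) : F.measure (F ⁻¹' Iic x) = ENNReal.ofReal (min x 1) := by
  rcases le_or_gt 1 x with hx1 | hx1
  · have := F.isProbabilityMeasure hF0 hF1
    rw [min_eq_right hx1, ENNReal.ofReal_one, ← MeasureTheory.measure_univ (μ := F.measure)]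
    congr
    exact eq_univ_of_forall fun t ↦ (F.mem_Icc_of_tendsto hF0 hF1 t).2.trans hx1
  by_cases hle : ∃ t, F t ≤ x
  · obtain ⟨b, hb, hpre⟩ :=
      F.mono.exists_preimage_Iic_eq_Iic hFc hle (hF1.eventually_const_lt hx1).exists
    rw [hpre, F.measure_Iic hF0, hb, sub_zero, min_eq_left hx1.le]
  · push Not at hle
    have hx0 : x ≤ 0 := by
      by_contra! hx
      obtain ⟨t, ht⟩ := (hF0.eventually_lt_const hx).exists
      exact (hle t).not_gt ht
    rw [show F ⁻¹' Iic x = ∅ from eq_empty_of_forall_notMem fun t ht ↦ (hle t).not_ge ht,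
      measure_empty, ENNReal.ofReal_eq_zero.2 ((min_le_left _ _).trans hx0)]

include hFc hF0 hF1 in
lemma map_measure_eq_volume_restrict_Ioc :
    F.measure.map F = volume.restrict (Ioc 0 1) := by
  have := F.isProbabilityMeasure hF0 hF1
  refine Measure.ext_of_Iic _ _ fun x ↦ ?_
  rw [Measure.map_apply hFc.measurable measurableSet_Iic, F.measure_preimage_Iic hFc hF0 hF1,
    Measure.restrict_apply measurableSet_Iic, inter_comm, Ioc_inter_Iic, Real.volume_Ioc,
    sub_zero, min_comm]

include hFc hF0 hF1 in
lemma integral_pow (m : ℕ) : ∫ t, F t ^ m ∂F.measure = 1 / (m + 1) := by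
  rw [← integral_map hFc.aemeasurable (continuous_pow m).aestronglyMeasurable,
    F.map_measure_eq_volume_restrict_Ioc hFc hF0 hF1,
    ← intervalIntegral.integral_of_le zero_le_one, _root_.integral_pow]
  simp

include hFc hF0 hF1 in
lemma Iic_ae_eq_preimage_Iic (a : ℝ) : Iic a =ᵐ[F.measure] F ⁻¹' Iic (F a) := by
  have := F.isProbabilityMeasure hF0 hF1
  refine ae_eq_of_subset_of_measure_ge (fun t ht ↦ F.mono ht) ?_
    measurableSet_Iic.nullMeasurableSet (measure_ne_top _ _)
  rw [F.measure_preimage_Iic hFc hF0 hF1, F.measure_Iic hF0, sub_zero,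
    min_eq_left (F.mem_Icc_of_tendsto hF0 hF1 a).2]

end StieltjesFunction

section Moments

variable {α : Type*} [MeasurableSpace α] {μ : Measure α} {h : α → ℝ}

lemma integrable_mul_comp_of_mem_Icc {X : α → ℝ} {l u : ℝ} (hX : Measurable X)
    (hXmem : ∀ a, X a ∈ Icc l u) (hh : Integrable h μ) {φ : ℝ → ℝ} (hφ : Continuous φ) :
    Integrable (fun a ↦ h a * φ (X a)) μ := by
  obtain ⟨C, hC⟩ := isCompact_Icc.exists_bound_of_continuousOn hφ.continuousOn
  exact hh.mul_bdd (hφ.measurable.comp hX).aestronglyMeasurable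
    (ae_of_all _ fun a ↦ hC _ (hXmem a))

lemma integral_mul_eval_comp_eq_zero_of_forall_pow {X : α → ℝ} {l u : ℝ} (hX : Measurable X)
    (hXmem : ∀ a, X a ∈ Icc l u) (hh : Integrable h μ)
    (hmom : ∀ n : ℕ, ∫ a, h a * X a ^ n ∂μ = 0) (p : Polynomial ℝ) :
    ∫ a, h a * p.eval (X a) ∂μ = 0 := by
  induction p using Polynomial.induction_on' with
  | add p q hp hq =>
    simp only [Polynomial.eval_add, mul_add]
    rw [integral_add (integrable_mul_comp_of_mem_Icc hX hXmem hh p.continuous)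
      (integrable_mul_comp_of_mem_Icc hX hXmem hh q.continuous), hp, hq, add_zero]
  | monomial n c =>
    simp only [Polynomial.eval_monomial, mul_left_comm _ c]
    rw [integral_const_mul, hmom, mul_zero]

lemma integral_mul_comp_eq_zero_of_forall_pow {X : α → ℝ} {l u : ℝ} (hX : Measurable X)
    (hXmem : ∀ a, X a ∈ Icc l u) (hh : Integrable h μ)
    (hmom : ∀ n : ℕ, ∫ a, h a * X a ^ n ∂μ = 0) {φ : ℝ → ℝ} (hφ : Continuous φ) :
    ∫ a, h a * φ (X a) ∂μ = 0 := by
  have hbound : ∀ ε > 0, ‖∫ a, h a * φ (X a) ∂μ‖ ≤ ε * ∫ a, ‖h a‖ ∂μ := by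
    intro ε hε
    obtain ⟨p, hp⟩ := exists_polynomial_near_of_continuousOn l u φ hφ.continuousOn ε hε
    have hsplit : ∫ a, h a * φ (X a) ∂μ = ∫ a, h a * (φ (X a) - p.eval (X a)) ∂μ := by
      simp only [mul_sub]
      rw [integral_sub (integrable_mul_comp_of_mem_Icc hX hXmem hh hφ)
        (integrable_mul_comp_of_mem_Icc hX hXmem hh p.continuous),
        integral_mul_eval_comp_eq_zero_of_forall_pow hX hXmem hh hmom, sub_zero]
    rw [hsplit, ← integral_const_mul ε (fun a ↦ ‖h a‖)]
    refine norm_integral_le_of_norm_le (hh.norm.const_mul ε) (ae_of_all _ fun a ↦ ?_)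
    rw [norm_mul, mul_comm ε, Real.norm_eq_abs (_ - _), abs_sub_comm]
    gcongr
    exact (hp _ (hXmem a)).le
  have hε : Tendsto (fun ε : ℝ ↦ ε * ∫ a, ‖h a‖ ∂μ) (nhdsWithin 0 (Ioi 0)) (nhds 0) :=
    ((continuous_mul_const _).tendsto' 0 0 (zero_mul _)).mono_left nhdsWithin_le_nhds
  exact norm_le_zero_iff.mp (ge_of_tendsto hε (eventually_nhdsWithin_of_forall hbound))

lemma setIntegral_preimage_eq_zero_of_forall_continuous {E : Type*} [TopologicalSpace E]
    [HasOuterApproxClosed E] [MeasurableSpace E] [OpensMeasurableSpace E] {X : α → E}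
    (hX : Measurable X) (hh : Integrable h μ)
    (hcont : ∀ φ : E → ℝ, Continuous φ → ∫ a, h a * φ (X a) ∂μ = 0) {s : Set E}
    (hs : IsClosed s) : ∫ a in X ⁻¹' s, h a ∂μ = 0 := by
  have hlim : ∀ a, Tendsto (fun n ↦ h a * (hs.apprSeq n (X a) : ℝ)) atTop
      (nhds ((X ⁻¹' s).indicator h a)) := by
    intro a
    have hind := NNReal.tendsto_coe.2
      (tendsto_pi_nhds.1 (HasOuterApproxClosed.tendsto_apprSeq hs) (X a))
    convert hind.const_mul (h a) using 2
    by_cases ha : X a ∈ s <;> simp [ha]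
  have hzero : ∀ n, ∫ a, h a * (hs.apprSeq n (X a) : ℝ) ∂μ = 0 := fun n ↦
    hcont _ (NNReal.continuous_coe.comp (hs.apprSeq n).continuous)
  rw [← integral_indicator (hX hs.measurableSet)]
  refine tendsto_nhds_unique (tendsto_integral_of_dominated_convergence (fun a ↦ ‖h a‖)
    (fun n ↦ ?_) hh.norm (fun n ↦ ae_of_all _ fun a ↦ ?_) (ae_of_all _ hlim)) ?_
  · exact hh.aestronglyMeasurable.mul
      ((NNReal.continuous_coe.comp (hs.apprSeq n).continuous).measurable.comp
        hX).aestronglyMeasurable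
  · rw [norm_mul]
    exact mul_le_of_le_one_right (norm_nonneg _)
      (by simpa using HasOuterApproxClosed.apprSeq_apply_le_one hs n (X a))
  · simp_rw [hzero]
    exact tendsto_const_nhds

end Moments

lemma ae_eq_zero_of_forall_setIntegral_Iic_eq_zero {μ : Measure ℝ} {f : ℝ → ℝ}
    (hf : Integrable f μ) (hIic : ∀ a, ∫ x in Iic a, f x ∂μ = 0) : f =ᵐ[μ] 0 := by
  have huniv : ∫ x, f x ∂μ = 0 := by
    have hlim := tendsto_setIntegral_of_monotone (μ := μ) (fun a : ℝ ↦ measurableSet_Iic)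
      (fun _ _ ↦ Iic_subset_Iic.2) (by rw [iUnion_Iic]; exact hf.integrableOn)
    simp only [hIic, iUnion_Iic, setIntegral_univ] at hlim
    exact tendsto_nhds_unique hlim tendsto_const_nhds
  suffices ∀ s, MeasurableSet s → ∫ x in s, f x ∂μ = 0 from
    hf.ae_eq_zero_of_forall_setIntegral_eq_zero fun s hs _ ↦ this s hs
  intro s hs
  induction s, hs using MeasurableSpace.induction_on_inter (borel_eq_generateFrom_Iic ℝ)
    isPiSystem_Iic with
  | empty => simp
  | basic _ ha =>
    obtain ⟨a, rfl⟩ := ha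
    exact hIic a
  | compl t ht iht =>
    simpa [iht, huniv] using integral_add_compl ht hf
  | iUnion g hdisj hmeas ihg =>
    simp [integral_iUnion hmeas hdisj hf.integrableOn, ihg]

theorem cdf_eq_of_moments_general
    (F : StieltjesFunction ℝ) (hFc : Continuous F)
    (hF0 : Tendsto F atBot (nhds 0)) (hF1 : Tendsto F atTop (nhds 1))
    (G : ℝ → ℝ)
    (hmom : ∀ n : ℕ, ∫ t, G t * (F t) ^ n ∂F.measure = 1 / (n + 2)) :
    ∀ᵐ t ∂F.measure, G t = F t := by
  have := F.isProbabilityMeasure hF0 hF1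
  have hF01 := F.mem_Icc_of_tendsto hF0 hF1
  have hFpow (k : ℕ) : Integrable (fun t ↦ F t ^ k) F.measure := by
    simpa using integrable_mul_comp_of_mem_Icc hFc.measurable hF01 (integrable_const 1)
      (continuous_pow k)
  -- A non-integrable function has Bochner integral `0`, so `hmom` certifies integrability.
  have hGpow (n : ℕ) : Integrable (fun t ↦ G t * F t ^ n) F.measure :=
    .of_integral_ne_zero (by rw [hmom n]; positivity)
  have hGF : Integrable (fun t ↦ G t - F t) F.measure :=
    (by simpa using hGpow 0 : Integrable G _).sub (by simpa using hFpow 1)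
  have hvanish (n : ℕ) : ∫ t, (G t - F t) * F t ^ n ∂F.measure = 0 := by
    simp only [sub_mul, ← pow_succ']
    rw [integral_sub (hGpow n) (hFpow (n + 1)), hmom n, F.integral_pow hFc hF0 hF1]
    push_cast
    ring
  have hIic (a : ℝ) : ∫ t in Iic a, (G t - F t) ∂F.measure = 0 := by
    rw [setIntegral_congr_set (F.Iic_ae_eq_preimage_Iic hFc hF0 hF1 a)]
    exact setIntegral_preimage_eq_zero_of_forall_continuous hFc.measurable hGF
      (fun φ hφ ↦ integral_mul_comp_eq_zero_of_forall_pow hFc.measurable hF01 hGF hvanish hφ)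
      isClosed_Iic
  filter_upwards [ae_eq_zero_of_forall_setIntegral_Iic_eq_zero hGF hIic] with t ht
  exact sub_eq_zero.mp ht

/-- Let `F` and `G` be two continuous cumulative distribution functions on `ℝ`.
If for every integer `n ≥ 0` we have `∫ G(t) (F(t))^n dF(t) = 1/(n+2)`, then
`G(t) = F(t)` for `F`-almost every `t`. -/
theorem cdf_eq_of_moments
    (F : StieltjesFunction ℝ) (hFc : Continuous F)
    (hF0 : Tendsto F atBot (nhds 0)) (hF1 : Tendsto F atTop (nhds 1))
    (G : ℝ → ℝ) (hGmono : Monotone G) (hGc : Continuous G)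
    (hG0 : Tendsto G atBot (nhds 0)) (hG1 : Tendsto G atTop (nhds 1))
    (hmom : ∀ n : ℕ, ∫ t, G t * (F t) ^ n ∂F.measure = 1 / (n + 2)) :
    ∀ᵐ t ∂F.measure, G t = F t :=
  cdf_eq_of_moments_general F hFc hF0 hF1 G hmom
end

section
/- Let F be a continuous cumulative distribution function on ℝ with quantile function Q(u) = inf{x : F(x) > u}, and let G : ℝ → [0,1] and h : [0,1] × [0,1] → [0,1] be measurable. Then ∫_ℝ h(G(t), F(t)) dF(t) = ∫_0^1 h(G(Q(u)), u) du. -/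
open MeasureTheory Filter Set Topology

/-! The quantile function pushes Lebesgue measure on `(0, 1)` forward to the Stieltjes measure
of `F`: for `u ∈ (0, 1)` continuity gives `F (Q u) = u`, so `Q u ≤ x` holds exactly when
`u ≤ F x`, up to the single point `u = F x`, and both measures give `Iic x` the mass `F x`.
Changing variables along `Q` then replaces `F (Q u)` by `u` in the integrand. -/

/-- Only meaningful on `(a, b)` when `f` runs from `a` to `b`: elsewhere the set is empty or
unbounded below and `sInf` returns the junk value `0`. -/
noncomputable def quantile (f : ℝ → ℝ) (u : ℝ) : ℝ := sInf {x | u < f x}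

section Quantile

variable {f : ℝ → ℝ} {a b u x : ℝ}

lemma bddBelow_setOf_lt_of_tendsto_atBot (hf : Monotone f) (ha : Tendsto f atBot (𝓝 a))
    (hu : a < u) : BddBelow {x | u < f x} := by
  obtain ⟨y, hy⟩ := (ha.eventually (eventually_lt_nhds hu)).exists
  exact ⟨y, fun z hz => (hf.reflect_lt (hy.trans hz)).le⟩

lemma nonempty_setOf_lt_of_tendsto_atTop (hb : Tendsto f atTop (𝓝 b)) (hu : u < b) :
    {x | u < f x}.Nonempty :=
  (hb.eventually (eventually_gt_nhds hu)).exists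

lemma quantile_le (hf : Monotone f) (ha : Tendsto f atBot (𝓝 a)) (hu : a < u)
    (hx : u < f x) : quantile f u ≤ x :=
  csInf_le (bddBelow_setOf_lt_of_tendsto_atBot hf ha hu) hx

lemma monotoneOn_quantile (hf : Monotone f) (ha : Tendsto f atBot (𝓝 a))
    (hb : Tendsto f atTop (𝓝 b)) : MonotoneOn (quantile f) (Ioo a b) :=
  fun _ hu _ hv huv => csInf_le_csInf (bddBelow_setOf_lt_of_tendsto_atBot hf ha hu.1)
    (nonempty_setOf_lt_of_tendsto_atTop hb hv.2) fun _ hx => huv.trans_lt hx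

lemma apply_quantile (hf : Monotone f) (hc : Continuous f) (ha : Tendsto f atBot (𝓝 a))
    (hb : Tendsto f atTop (𝓝 b)) (hu : u ∈ Ioo a b) : f (quantile f u) = u := by
  refine le_antisymm ?_ ?_
  · have hsub : Iio (quantile f u) ⊆ {x | f x ≤ u} := fun x hx =>
      not_lt.1 fun hux => (quantile_le hf ha hu.1 hux).not_gt hx
    refine closure_minimal hsub (isClosed_le hc continuous_const) ?_
    rw [closure_Iio]
    exact mem_Iic.2 le_rfl
  · have hmem : quantile f u ∈ closure {x | u < f x} :=
      csInf_mem_closure (nonempty_setOf_lt_of_tendsto_atTop hb hu.2)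
        (bddBelow_setOf_lt_of_tendsto_atBot hf ha hu.1)
    have hsub : {x | u < f x} ⊆ {x | u ≤ f x} := fun _ (hx : u < f _) => hx.le
    exact closure_minimal hsub (isClosed_le continuous_const hc) hmem

lemma aemeasurable_restrict_quantile (hf : Monotone f) (ha : Tendsto f atBot (𝓝 a))
    (hb : Tendsto f atTop (𝓝 b)) {μ : Measure ℝ} :
    AEMeasurable (quantile f) (μ.restrict (Ioo a b)) :=
  aemeasurable_restrict_of_monotoneOn measurableSet_Ioo (monotoneOn_quantile hf ha hb)

end Quantile

theorem StieltjesFunction.map_restrict_quantile (F : StieltjesFunction ℝ) (hc : Continuous F)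
    {a b : ℝ} (ha : Tendsto F atBot (𝓝 a)) (hb : Tendsto F atTop (𝓝 b)) :
    (volume.restrict (Ioo a b)).map (quantile F) = F.measure := by
  have := F.isFiniteMeasure ha hb
  have hQm := aemeasurable_restrict_quantile (μ := volume) F.mono ha hb
  refine (Measure.ext_of_Iic _ _ fun x => ?_).symm
  rw [F.measure_Iic ha, Measure.map_apply_of_aemeasurable hQm measurableSet_Iic,
    Measure.restrict_apply' measurableSet_Ioo]
  have hFb : F x ≤ b := F.mono.ge_of_tendsto hb x
  have hlower : Ioo a (F x) ⊆ quantile F ⁻¹' Iic x ∩ Ioo a b := fun u hu =>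
    ⟨quantile_le F.mono ha hu.1 hu.2, hu.1, hu.2.trans_le hFb⟩
  have hupper : quantile F ⁻¹' Iic x ∩ Ioo a b ⊆ Ioc a (F x) := fun u ⟨hux, hu⟩ =>
    ⟨hu.1, apply_quantile F.mono hc ha hb hu ▸ F.mono hux⟩
  refine le_antisymm ?_ ?_
  · simpa only [Real.volume_Ioo] using measure_mono (μ := volume) hlower
  · simpa only [Real.volume_Ioc] using measure_mono (μ := volume) hupper

theorem integral_quantile_change_of_variables_general
    (F : StieltjesFunction ℝ) (hFc : Continuous F)
    (hF0 : Tendsto F atBot (nhds 0)) (hF1 : Tendsto F atTop (nhds 1))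
    (Q : ℝ → ℝ) (hQ : ∀ u, Q u = sInf {x : ℝ | u < F x})
    (G : ℝ → ℝ) (hGm : Measurable G)
    (h : ℝ → ℝ → ℝ) (hhm : Measurable fun p : ℝ × ℝ => h p.1 p.2) :
    ∫ t, h (G t) (F t) ∂F.measure = ∫ u in Set.Ioo (0:ℝ) 1, h (G (Q u)) u := by
  obtain rfl : Q = quantile F := funext hQ
  rw [← F.map_restrict_quantile hFc hF0 hF1,
    integral_map (f := fun t => h (G t) (F t)) (aemeasurable_restrict_quantile F.mono hF0 hF1)
      (hhm.comp (hGm.prodMk hFc.measurable)).aestronglyMeasurable]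
  exact setIntegral_congr_fun measurableSet_Ioo fun u hu => by
    rw [apply_quantile F.mono hFc hF0 hF1 hu]

/-- Change of variables through the quantile function: for a continuous CDF `F`
with quantile function `Q(u) = inf {x | F x > u}`, and measurable `G : ℝ → [0,1]`,
`h : [0,1] × [0,1] → [0,1]`, one has
`∫ h(G(t), F(t)) dF(t) = ∫_0^1 h(G(Q(u)), u) du`. -/
theorem integral_quantile_change_of_variables
    (F : StieltjesFunction ℝ) (hFc : Continuous F)
    (hF0 : Tendsto F atBot (nhds 0)) (hF1 : Tendsto F atTop (nhds 1))
    (Q : ℝ → ℝ) (hQ : ∀ u, Q u = sInf {x : ℝ | u < F x})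
    (G : ℝ → ℝ) (hGm : Measurable G) (hGrange : ∀ t, G t ∈ Set.Icc (0:ℝ) 1)
    (h : ℝ → ℝ → ℝ) (hhm : Measurable fun p : ℝ × ℝ => h p.1 p.2)
    (hhrange : ∀ x y, h x y ∈ Set.Icc (0:ℝ) 1) :
    ∫ t, h (G t) (F t) ∂F.measure = ∫ u in Set.Ioo (0:ℝ) 1, h (G (Q u)) u :=
  integral_quantile_change_of_variables_general F hFc hF0 hF1 Q hQ G hGm h hhm
end

section
/- Let {F_α : α > 0} be a family of CDFs such that whenever X_{α_1}, ..., X_{α_n} are independent with X_{α_i} ~ F_{α_i}, we have P(X_{α_1} > max(X_{α_2},...,X_{α_n})) = α_1/(α_1+...+α_n) for all n ≥ 2. Then every F_α is continuous. -/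
open MeasureTheory ProbabilityTheory

/-- A family `{F α, α > 0}` of CDFs is max-compatible if for all `n ≥ 2` and
independent `X i ~ F (α i)`, the probability that `X 0` exceeds the maximum of
the others equals `α 0 / ∑ α i`. -/
def MaxCompatible (F : ℝ → ℝ → ℝ) : Prop :=
  ∀ (n : ℕ) (hn : 2 ≤ n) (α : Fin n → ℝ), (∀ i, 0 < α i) →
  ∀ (Ω : Type) [MeasureSpace Ω] [IsProbabilityMeasure (ℙ : Measure Ω)]
    (X : Fin n → Ω → ℝ), (∀ i, Measurable (X i)) →
    iIndepFun X ℙ →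
    (∀ i t, (ℙ {ω | X i ω ≤ t}).toReal = F (α i) t) →
    (ℙ {ω | ∀ j, j ≠ (⟨0, by omega⟩ : Fin n) → X j ω < X (⟨0, by omega⟩ : Fin n) ω}).toReal
      = α ⟨0, by omega⟩ / ∑ i, α i

/-- `F` is the cumulative distribution function of some probability measure on `ℝ`. -/
def IsCDF (F : ℝ → ℝ) : Prop :=
  ∃ μ : Measure ℝ, IsProbabilityMeasure μ ∧ ∀ t, (μ (Set.Iic t)).toReal = F t

open Set

/-!
Let `X`, `Y` be independent with law `F α`. Max-compatibility with `n = 2` and `α₁ = α₂ = α` gives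
`P(Y < X) = 1/2`, and by exchangeability also `P(X < Y) = 1/2`, so `P(X = Y) = 0`. As
`P(X = x)² ≤ P(X = Y)` for every `x`, the law `F α` has no atoms, hence is continuous.
-/

lemma StieltjesFunction.continuous_of_measure_singleton {R : Type*} [LinearOrder R]
    [TopologicalSpace R] [OrderTopology R] [CompactIccSpace R] [MeasurableSpace R] [BorelSpace R]
    [SecondCountableTopology R] [DenselyOrdered R] (f : StieltjesFunction R)
    (h : ∀ x, f.measure {x} = 0) : Continuous f := by
  refine continuous_iff_continuousAt.2 fun x => ?_
  have hle : Function.leftLim f x ≤ f x := f.mono.leftLim_le le_rfl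
  have hge : f x ≤ Function.leftLim f x := by
    have := f.measure_singleton x
    rw [h x, eq_comm, ENNReal.ofReal_eq_zero] at this
    linarith
  rw [f.mono.continuousAt_iff_leftLim_eq_rightLim, f.rightLim_eq]
  exact le_antisymm hle hge

lemma ProbabilityTheory.continuous_cdf (μ : Measure ℝ) [IsProbabilityMeasure μ]
    [NullSingletonClass μ] :
    Continuous (cdf μ) :=
  (cdf μ).continuous_of_measure_singleton fun x => by rw [measure_cdf, measure_singleton]

lemma MeasureTheory.nullSingletonClass_of_pi_diagonal_null {α : Type*} [MeasurableSpace α]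
    (μ : Measure α) [SigmaFinite μ] (h : Measure.pi (fun _ : Fin 2 => μ) {ω | ω 0 = ω 1} = 0) :
    NullSingletonClass μ := by
  refine ⟨fun x => ?_⟩
  have hsub : univ.pi (fun _ : Fin 2 => ({x} : Set α)) ⊆ {ω | ω 0 = ω 1} := by
    intro ω hω
    simp only [mem_univ_pi, mem_singleton_iff] at hω
    simp [hω]
  have := measure_mono_null hsub h
  rw [Measure.pi_pi, Fin.prod_univ_two] at this
  exact mul_self_eq_zero.1 this

lemma MeasureTheory.Measure.pi_fin_two_setOf_swap {α : Type*} [MeasurableSpace α] (μ : Measure α)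
    [SigmaFinite μ] (r : α → α → Prop) :
    Measure.pi (fun _ : Fin 2 => μ) {ω | r (ω 0) (ω 1)}
      = Measure.pi (fun _ : Fin 2 => μ) {ω | r (ω 1) (ω 0)} :=
  ((measurePreserving_piCongrLeft (fun _ : Fin 2 => μ) (Equiv.swap 0 1)).measure_preimage_equiv
    {ω | r (ω 0) (ω 1)}).symm

lemma measure_setOf_eq_eq_zero_of_measure_lt_add_measure_gt {Ω : Type*} [MeasurableSpace Ω]
    (P : Measure Ω) [IsProbabilityMeasure P] {X Y : Ω → ℝ} (hX : Measurable X)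
    (hY : Measurable Y) (h : P {ω | X ω < Y ω} + P {ω | Y ω < X ω} = 1) :
    P {ω | X ω = Y ω} = 0 := by
  have hdisj : Disjoint {ω | X ω < Y ω} {ω | Y ω < X ω} :=
    disjoint_left.2 fun _ h h' => lt_asymm (α := ℝ) h h'
  have hcompl : {ω | X ω = Y ω} = ({ω | X ω < Y ω} ∪ {ω | Y ω < X ω})ᶜ := by
    ext ω
    simp [le_antisymm_iff, and_comm]
  rw [hcompl, measure_compl ((measurableSet_lt hX hY).union (measurableSet_lt hY hX))
    (measure_ne_top _ _), measure_union hdisj (measurableSet_lt hY hX), h, measure_univ,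
    tsub_self]

lemma MaxCompatible.pi_measure_lt_eq_half {F : ℝ → ℝ → ℝ} (hmax : MaxCompatible F) {α : ℝ}
    (hα : 0 < α) (μ : Measure ℝ) [IsProbabilityMeasure μ]
    (hμ : ∀ t, (μ (Iic t)).toReal = F α t) :
    Measure.pi (fun _ : Fin 2 => μ) {ω | ω 1 < ω 0} = 1 / 2 := by
  let : MeasureSpace (Fin 2 → ℝ) := ⟨Measure.pi fun _ => μ⟩
  have : IsProbabilityMeasure (ℙ : Measure (Fin 2 → ℝ)) :=
    inferInstanceAs (IsProbabilityMeasure (Measure.pi fun _ => μ))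
  have hmarg : ∀ (i : Fin 2) t, (ℙ {ω : Fin 2 → ℝ | ω i ≤ t}).toReal = F α t := fun i t => by
    rw [← hμ t, ← (measurePreserving_eval (fun _ : Fin 2 => μ) i).measure_preimage
      measurableSet_Iic.nullMeasurableSet]
    rfl
  have h := hmax 2 le_rfl (fun _ => α) (fun _ => hα) (Fin 2 → ℝ) (fun i ω => ω i)
    (fun i => measurable_pi_apply i) (iIndepFun_pi fun _ => aemeasurable_id) hmarg
  simp only [Fin.zero_eta, Fin.isValue, ne_eq, Fin.forall_fin_two, not_true_eq_false,
    lt_self_iff_false, imp_self, one_ne_zero, not_false_eq_true, forall_const, true_and,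
    Finset.sum_const, Finset.card_univ, Fintype.card_fin, nsmul_eq_mul, Nat.cast_ofNat,
    div_mul_cancel_right₀ hα.ne'] at h
  exact (ENNReal.toReal_eq_toReal_iff' (measure_ne_top _ _) (by simp)).1 (h.trans (by simp))

/-- Every member of a max-compatible family of CDFs is continuous. -/
theorem maxCompatible_continuous
    (F : ℝ → ℝ → ℝ) (hCDF : ∀ α : ℝ, 0 < α → IsCDF (F α))
    (hmax : MaxCompatible F) :
    ∀ α : ℝ, 0 < α → Continuous (F α) := by
  intro α hα
  obtain ⟨μ, hμ, hF⟩ := hCDF α hα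
  have hgt := hmax.pi_measure_lt_eq_half hα μ hF
  have hlt := (Measure.pi_fin_two_setOf_swap μ (· < ·)).trans hgt
  have hdiag : Measure.pi (fun _ : Fin 2 => μ) {ω | ω 0 = ω 1} = 0 :=
    measure_setOf_eq_eq_zero_of_measure_lt_add_measure_gt _ (measurable_pi_apply _)
      (measurable_pi_apply _) (by rw [hlt, hgt, ENNReal.add_halves])
  have := nullSingletonClass_of_pi_diagonal_null μ hdiag
  have hcdf : F α = cdf μ := funext fun t => by rw [cdf_eq_real, measureReal_def, hF]
  exact hcdf ▸ continuous_cdf μ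
end

section
/- Let F be a continuous CDF and α_1, α_2 > 0. If X_{α_1} and X_{α_2} are independent random variables with CDFs F^{α_1} and F^{α_2} respectively, then P(X_{α_1} > X_{α_2}) = α_1/(α_1 + α_2). -/
/-!
Write `H = F ^ α₁` and `K = F ^ α₂` for the cdfs of `X₁` and `X₂`, and `β = α₂ / α₁`. Then
`K = H ^ β`, also where `F < 0` and `Real.rpow` is `|F| ^ α * cos (α π)`: on such a tail the
cosine factors are forced to match by `H, K → 1` at `+∞`. By independence and continuity of `K`,
`P(X₂ < X₁) = E[K(X₁)] = E[H(X₁) ^ β]`, and `H(X₁)` is uniform on `(0, 1]`, so this is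
`∫₀¹ u ^ β du = 1 / (β + 1) = α₁ / (α₁ + α₂)`.
-/

open MeasureTheory ProbabilityTheory Set Filter Topology

lemma exists_preimage_Iic_eq_Iic {H : ℝ → ℝ} (hc : Continuous H) (hm : Monotone H) {v : ℝ}
    (hne : (H ⁻¹' Iic v).Nonempty) {x : ℝ} (hx : v < H x) :
    ∃ a, H ⁻¹' Iic v = Iic a ∧ H a = v := by
  have hbdd : BddAbove (H ⁻¹' Iic v) :=
    ⟨x, fun y (hy : H y ≤ v) => le_of_not_gt fun hxy => (hy.trans_lt hx).not_ge (hm hxy.le)⟩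
  set a := sSup (H ⁻¹' Iic v)
  have ha : H a ≤ v := (isClosed_Iic.preimage hc).csSup_mem hne hbdd
  have hax : a < x := lt_of_not_ge fun hxa => (hx.trans_le (hm hxa)).not_ge ha
  obtain ⟨b, hb, hHb⟩ := intermediate_value_Icc hax.le hc.continuousOn ⟨ha, hx.le⟩
  have hba : b ≤ a := le_csSup hbdd hHb.le
  refine ⟨a, subset_antisymm (fun y hy => le_csSup hbdd hy) fun y hy => (hm hy).trans ha, ?_⟩
  rw [← le_antisymm hba hb.1, hHb]

lemma Real.rpow_of_neg {x : ℝ} (hx : x < 0) (y : ℝ) :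
    x ^ y = (-x) ^ y * Real.cos (y * Real.pi) := by
  rw [Real.rpow_def_of_neg hx, Real.rpow_def_of_pos (neg_pos.2 hx), Real.log_neg_eq_log]

/-- On a tail where `F < 0`, `F ^ α = (-F) ^ α * cos (α π)`; the limits at `+∞` force
`cos (α₂ π) = cos (α₁ π) ^ (α₂ / α₁)`. -/
lemma rpow_eq_rpow_rpow_of_forall_neg {F : ℝ → ℝ} {α₁ α₂ t : ℝ} (hα₁ : α₁ ≠ 0)
    (hneg : ∀ s ≥ t, F s < 0) (ht : 0 ≤ F t ^ α₁)
    (h₁ : Tendsto (fun s => F s ^ α₁) atTop (𝓝 1)) (h₂ : Tendsto (fun s => F s ^ α₂) atTop (𝓝 1)) :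
    F t ^ α₂ = (F t ^ α₁) ^ (α₂ / α₁) := by
  set c₁ := Real.cos (α₁ * Real.pi)
  set c₂ := Real.cos (α₂ * Real.pi)
  have hc₁ : 0 ≤ c₁ := by
    rw [Real.rpow_of_neg (hneg t le_rfl)] at ht
    exact nonneg_of_mul_nonneg_right ht (Real.rpow_pos_of_pos (neg_pos.2 (hneg t le_rfl)) _)
  have hrel : ∀ s ≥ t, c₁ ^ (α₂ / α₁) * F s ^ α₂ = c₂ * (F s ^ α₁) ^ (α₂ / α₁) := fun s hs => by
    have hs' := neg_nonneg.2 (hneg s hs).le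
    rw [Real.rpow_of_neg (hneg s hs), Real.rpow_of_neg (hneg s hs),
      Real.mul_rpow (Real.rpow_nonneg hs' _) hc₁, ← Real.rpow_mul hs', mul_div_cancel₀ _ hα₁]
    ring
  have hc : c₁ ^ (α₂ / α₁) = c₂ := by
    refine tendsto_nhds_unique_of_eventuallyEq (by simpa using h₂.const_mul (c₁ ^ (α₂ / α₁)))
      (by simpa using (h₁.rpow_const (p := α₂ / α₁) (Or.inl one_ne_zero)).const_mul c₂) ?_
    filter_upwards [eventually_ge_atTop t] with s hs using hrel s hs
  have hc₁_ne : c₁ ≠ 0 := by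
    rintro hc₁0
    have h0 : ∀ᶠ s in atTop, (0 : ℝ) = F s ^ α₁ := by
      filter_upwards [eventually_ge_atTop t] with s hs
      rw [Real.rpow_of_neg (hneg s hs), show Real.cos (α₁ * Real.pi) = 0 from hc₁0, mul_zero]
    exact zero_ne_one (tendsto_nhds_unique (tendsto_const_nhds.congr' h0) h₁)
  have hpos : 0 < c₁ ^ (α₂ / α₁) := Real.rpow_pos_of_pos (hc₁.lt_of_ne' hc₁_ne) _
  exact mul_left_cancel₀ hpos.ne' (by rw [hrel t le_rfl, hc])

namespace ProbabilityTheory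

section CDF

variable {μ : Measure ℝ} [IsProbabilityMeasure μ]

lemma measure_Iio_eq_ofReal_cdf {x : ℝ} (hx : ContinuousAt (cdf μ) x) :
    μ (Iio x) = ENNReal.ofReal (cdf μ x) := by
  have hatom : μ {x} = 0 := by
    rw [← measure_cdf μ, StieltjesFunction.measure_singleton,
      hx.continuousWithinAt.leftLim_eq, sub_self, ENNReal.ofReal_zero]
  rw [measure_congr (Iio_ae_eq_Iic' hatom), ofReal_cdf]

lemma measure_preimage_cdf_Iic (hc : Continuous (cdf μ)) (v : ℝ) :
    μ (cdf μ ⁻¹' Iic v) = ENNReal.ofReal (min v 1) := by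
  rcases le_or_gt 1 v with hv1 | hv1
  · have huniv : cdf μ ⁻¹' Iic v = univ :=
      eq_univ_of_forall fun x => (cdf_le_one μ x).trans hv1
    rw [huniv, measure_univ, min_eq_right hv1, ENNReal.ofReal_one]
  rw [min_eq_left hv1.le]
  obtain ⟨x, hx⟩ := ((tendsto_cdf_atTop μ).eventually_const_lt hv1).exists
  by_cases hne : (cdf μ ⁻¹' Iic v).Nonempty
  · obtain ⟨a, hIic, ha⟩ := exists_preimage_Iic_eq_Iic hc (monotone_cdf μ) hne hx
    rw [hIic, ← ofReal_cdf, ha]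
  · have hv0 : v ≤ 0 := le_of_not_gt fun hv0 =>
      hne (((tendsto_cdf_atBot μ).eventually_lt_const hv0).exists.imp fun _ => le_of_lt)
    rw [not_nonempty_iff_eq_empty.mp hne, measure_empty, ENNReal.ofReal_of_nonpos hv0]

/-- The probability integral transform. -/
lemma map_cdf_eq_volume_restrict (hc : Continuous (cdf μ)) :
    μ.map (cdf μ) = volume.restrict (Ioc 0 1) := by
  refine Measure.ext_of_Iic _ _ fun v => ?_
  rw [Measure.map_apply (monotone_cdf μ).measurable measurableSet_Iic,
    measure_preimage_cdf_Iic hc, Measure.restrict_apply measurableSet_Iic, inter_comm,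
    Ioc_inter_Iic, Real.volume_Ioc, sub_zero, min_comm]

lemma lintegral_ofReal_cdf_rpow (hc : Continuous (cdf μ)) {β : ℝ} (hβ : -1 < β) :
    ∫⁻ x, ENNReal.ofReal (cdf μ x ^ β) ∂μ = ENNReal.ofReal (1 / (β + 1)) := by
  have hint : IntegrableOn (fun u : ℝ => u ^ β) (Ioc 0 1) :=
    (intervalIntegrable_iff_integrableOn_Ioc_of_le zero_le_one).mp
      (intervalIntegral.intervalIntegrable_rpow' hβ)
  have hnonneg : 0 ≤ᵐ[volume.restrict (Ioc (0 : ℝ) 1)] fun u => u ^ β :=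
    (ae_restrict_iff' measurableSet_Ioc).mpr (.of_forall fun u hu => Real.rpow_nonneg hu.1.le β)
  calc ∫⁻ x, ENNReal.ofReal (cdf μ x ^ β) ∂μ
      = ∫⁻ u, ENNReal.ofReal (u ^ β) ∂(μ.map (cdf μ)) :=
        (lintegral_map (by fun_prop : Measurable fun u : ℝ => ENNReal.ofReal (u ^ β))
          (monotone_cdf μ).measurable).symm
    _ = ENNReal.ofReal (∫ u in Ioc 0 1, u ^ β) := by
        rw [map_cdf_eq_volume_restrict hc, ofReal_integral_eq_lintegral_ofReal hint hnonneg]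
    _ = ENNReal.ofReal (1 / (β + 1)) := by
        rw [← intervalIntegral.integral_of_le zero_le_one, integral_rpow (Or.inl hβ),
          Real.one_rpow, Real.zero_rpow (by linarith), sub_zero, one_div]

end CDF

section Independent

variable {Ω : Type*} [MeasurableSpace Ω] {μ : Measure Ω} [IsProbabilityMeasure μ] {X Y : Ω → ℝ}

lemma cdf_map_eq_toReal_measure (hX : Measurable X) (t : ℝ) :
    cdf (μ.map X) t = (μ {ω | X ω ≤ t}).toReal := by
  have := Measure.isProbabilityMeasure_map (μ := μ) hX.aemeasurable
  rw [cdf_eq_real, measureReal_def, Measure.map_apply hX measurableSet_Iic]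
  rfl

lemma measure_lt_eq_lintegral_cdf (hX : Measurable X) (hY : Measurable Y) (hXY : IndepFun X Y μ)
    (hc : Continuous (cdf (μ.map Y))) :
    μ {ω | Y ω < X ω} = ∫⁻ x, ENNReal.ofReal (cdf (μ.map Y) x) ∂(μ.map X) := by
  have := Measure.isProbabilityMeasure_map (μ := μ) hY.aemeasurable
  have hlt : MeasurableSet {p : ℝ × ℝ | p.2 < p.1} := measurableSet_lt measurable_snd measurable_fst
  calc μ {ω | Y ω < X ω} = μ.map (fun ω => (X ω, Y ω)) {p | p.2 < p.1} :=
        (Measure.map_apply (hX.prodMk hY) hlt).symm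
    _ = ∫⁻ x, μ.map Y (Iio x) ∂(μ.map X) := by
        rw [(indepFun_iff_map_prod_eq_prod_map_map hX.aemeasurable hY.aemeasurable).mp hXY,
          Measure.prod_apply hlt]
        rfl
    _ = ∫⁻ x, ENNReal.ofReal (cdf (μ.map Y) x) ∂(μ.map X) :=
        lintegral_congr fun x => measure_Iio_eq_ofReal_cdf hc.continuousAt

lemma measure_lt_of_cdf_eq_rpow (hX : Measurable X) (hY : Measurable Y) (hXY : IndepFun X Y μ)
    (hc : Continuous (cdf (μ.map X))) {β : ℝ} (hβ : 0 ≤ β)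
    (hYX : ⇑(cdf (μ.map Y)) = fun x => cdf (μ.map X) x ^ β) :
    μ {ω | Y ω < X ω} = ENNReal.ofReal (1 / (β + 1)) := by
  have := Measure.isProbabilityMeasure_map (μ := μ) hX.aemeasurable
  have hcY : Continuous (cdf (μ.map Y)) := hYX ▸ hc.rpow_const fun _ => Or.inr hβ
  rw [measure_lt_eq_lintegral_cdf hX hY hXY hcY, hYX]
  exact lintegral_ofReal_cdf_rpow hc (by linarith)

end Independent

lemma cdf_eq_cdf_rpow_of_eq_rpow {μ ν : Measure ℝ} {F : ℝ → ℝ} (hF : Continuous F) {α₁ α₂ : ℝ}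
    (hα₁ : α₁ ≠ 0) (hα₂ : α₂ ≠ 0) (hμ : ⇑(cdf μ) = fun t => F t ^ α₁)
    (hν : ⇑(cdf ν) = fun t => F t ^ α₂) :
    ⇑(cdf ν) = fun t => cdf μ t ^ (α₂ / α₁) := by
  funext t
  simp only [hμ, hν]
  rcases le_or_gt 0 (F t) with hFt | hFt
  · rw [← Real.rpow_mul hFt, mul_div_cancel₀ _ hα₁]
  by_cases hsign : ∃ s ≥ t, 0 ≤ F s
  · obtain ⟨s, hts, hFs⟩ := hsign
    obtain ⟨u, hu, hFu⟩ := intermediate_value_Icc hts hF.continuousOn ⟨hFt.le, hFs⟩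
    have hvanish : ∀ (ρ : Measure ℝ) {α : ℝ}, α ≠ 0 → ⇑(cdf ρ) = (fun s => F s ^ α) →
        F t ^ α = 0 := by
      intro ρ α hα hρ
      have h := monotone_cdf ρ hu.1
      simp only [hρ, hFu, Real.zero_rpow hα] at h
      exact le_antisymm h (by simpa [hρ] using cdf_nonneg ρ t)
    rw [hvanish μ hα₁ hμ, hvanish ν hα₂ hν, Real.zero_rpow (div_ne_zero hα₂ hα₁)]
  · push Not at hsign
    exact rpow_eq_rpow_rpow_of_forall_neg hα₁ hsign (by simpa [hμ] using cdf_nonneg μ t)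
      (hμ ▸ tendsto_cdf_atTop μ) (hν ▸ tendsto_cdf_atTop ν)

end ProbabilityTheory

/-- If `F` is a continuous CDF, `α₁, α₂ > 0`, and `X₁, X₂` are independent random
variables with CDFs `F^α₁` and `F^α₂`, then `P(X₁ > X₂) = α₁/(α₁+α₂)`. -/
theorem prob_gt_of_pow_cdf
    {Ω : Type} [MeasureSpace Ω] [IsProbabilityMeasure (ℙ : Measure Ω)]
    (F : ℝ → ℝ) (hFc : Continuous F)
    (α₁ α₂ : ℝ) (hα₁ : 0 < α₁) (hα₂ : 0 < α₂)
    (X₁ X₂ : Ω → ℝ) (hX₁ : Measurable X₁) (hX₂ : Measurable X₂)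
    (hindep : IndepFun X₁ X₂ ℙ)
    (hcdf₁ : ∀ t, (ℙ {ω | X₁ ω ≤ t}).toReal = F t ^ α₁)
    (hcdf₂ : ∀ t, (ℙ {ω | X₂ ω ≤ t}).toReal = F t ^ α₂) :
    (ℙ {ω | X₂ ω < X₁ ω}).toReal = α₁ / (α₁ + α₂) := by
  have h₁ : ⇑(cdf (Measure.map X₁ ℙ)) = fun t => F t ^ α₁ :=
    funext fun t => (cdf_map_eq_toReal_measure hX₁ t).trans (hcdf₁ t)
  have h₂ : ⇑(cdf (Measure.map X₂ ℙ)) = fun t => F t ^ α₂ :=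
    funext fun t => (cdf_map_eq_toReal_measure hX₂ t).trans (hcdf₂ t)
  have hc : Continuous (cdf (Measure.map X₁ ℙ)) := h₁ ▸ hFc.rpow_const fun _ => Or.inr hα₁.le
  rw [measure_lt_of_cdf_eq_rpow hX₁ hX₂ hindep hc (div_pos hα₂ hα₁).le
      (cdf_eq_cdf_rpow_of_eq_rpow hFc hα₁.ne' hα₂.ne' h₁ h₂),
    ENNReal.toReal_ofReal (by positivity)]
  field_simp
  ring
end

section
/- Suppose {F_α : α > 0} is a max-compatible family of continuous CDFs with multiplicative noise, i.e., X_α ~ f(α) · G in distribution for some function f : (0,∞) → ℝ \ {0} and some random variable G with continuous CDF. Then either G > 0 almost surely or G < 0 almost surely; i.e., min(P(G>0), P(G<0)) = 0. -/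
open MeasureTheory ProbabilityTheory

/-! If `m = min (P(G > 0), P(G < 0))` were positive, take independent `X = f(m²) G` and
`Y = f(1) G`. Whatever the signs of `f(m²)` and `f(1)`, the event `X > 0 > Y` has probability
at least `m²`, while max-compatibility gives `P(X > Y) = m² / (m² + 1) < m²`. -/

section Sign

variable {Ω : Type*} [MeasurableSpace Ω] {μ : Measure Ω}

lemma min_measureReal_sign_le_measureReal_mul_pos (G : Ω → ℝ) {c : ℝ} (hc : c ≠ 0) :
    min (μ.real {ω | 0 < G ω}) (μ.real {ω | G ω < 0}) ≤ μ.real {ω | 0 < c * G ω} := by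
  rcases hc.lt_or_gt with hneg | hpos
  · simp_rw [← smul_eq_mul, smul_pos_iff_of_neg_left hneg]
    exact min_le_right _ _
  · simp_rw [mul_pos_iff_of_pos_left hpos]
    exact min_le_left _ _

lemma min_measureReal_sign_le_measureReal_mul_neg (G : Ω → ℝ) {c : ℝ} (hc : c ≠ 0) :
    min (μ.real {ω | 0 < G ω}) (μ.real {ω | G ω < 0}) ≤ μ.real {ω | c * G ω < 0} := by
  simpa only [neg_mul, neg_pos] using
    min_measureReal_sign_le_measureReal_mul_pos (μ := μ) G (neg_ne_zero.2 hc)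

lemma ProbabilityTheory.IndepFun.measureReal_pos_mul_measureReal_neg_le [IsFiniteMeasure μ]
    {X Y : Ω → ℝ} (hXY : IndepFun X Y μ) :
    μ.real {ω | 0 < X ω} * μ.real {ω | Y ω < 0} ≤ μ.real {ω | Y ω < X ω} := by
  have hprod := hXY.measure_inter_preimage_eq_mul _ _
    (measurableSet_Ioi (a := 0)) (measurableSet_Iio (a := 0))
  calc μ.real {ω | 0 < X ω} * μ.real {ω | Y ω < 0}
      = μ.real (X ⁻¹' Set.Ioi 0 ∩ Y ⁻¹' Set.Iio 0) := by
        simp only [Measure.real, hprod, ENNReal.toReal_mul]; rfl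
    _ ≤ μ.real {ω | Y ω < X ω} :=
        measureReal_mono fun ω ⟨hX0, hY0⟩ => (show Y ω < 0 from hY0).trans hX0

end Sign

section Product

variable {Ω : Type*} [MeasureSpace Ω] [IsProbabilityMeasure (ℙ : Measure Ω)]

lemma measureReal_pi_eval_preimage {ι : Type*} [Fintype ι] (i : ι) {s : Set Ω}
    (hs : MeasurableSet s) :
    (ℙ : Measure (ι → Ω)).real (Function.eval i ⁻¹' s) = (ℙ : Measure Ω).real s := by
  rw [volume_pi, measureReal_def,
    (measurePreserving_eval _ i).measure_preimage hs.nullMeasurableSet]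
  rfl

lemma min_measureReal_sign_sq_le_measureReal_pi_lt {G : Ω → ℝ} (hG : Measurable G) {a b : ℝ}
    (ha : a ≠ 0) (hb : b ≠ 0) :
    min ((ℙ : Measure Ω).real {x | 0 < G x}) ((ℙ : Measure Ω).real {x | G x < 0}) ^ 2 ≤
      (ℙ : Measure (Fin 2 → Ω)).real {ω | b * G (ω 1) < a * G (ω 0)} := by
  have hindep : iIndepFun (fun (i : Fin 2) (ω : Fin 2 → Ω) => ![a, b] i * G (ω i)) ℙ := by
    rw [volume_pi]; exact iIndepFun_pi fun _ => (measurable_const.mul hG).aemeasurable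
  calc _ ≤ (ℙ : Measure Ω).real {x | 0 < a * G x} * (ℙ : Measure Ω).real {x | b * G x < 0} := by
        rw [sq]
        exact mul_le_mul (min_measureReal_sign_le_measureReal_mul_pos G ha)
          (min_measureReal_sign_le_measureReal_mul_neg G hb) (le_min measureReal_nonneg
          measureReal_nonneg) measureReal_nonneg
    _ = (ℙ : Measure (Fin 2 → Ω)).real {ω | 0 < a * G (ω 0)} *
          (ℙ : Measure (Fin 2 → Ω)).real {ω | b * G (ω 1) < 0} := by
        congr 1
        · exact (measureReal_pi_eval_preimage 0
            (measurableSet_lt measurable_const (measurable_const.mul hG))).symm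
        · exact (measureReal_pi_eval_preimage 1
            (measurableSet_lt (measurable_const.mul hG) measurable_const)).symm
    _ ≤ _ := (hindep.indepFun zero_ne_one).measureReal_pos_mul_measureReal_neg_le

end Product

lemma MaxCompatible.measureReal_pi_lt {F : ℝ → ℝ → ℝ} (hmax : MaxCompatible F)
    {Ω : Type} [MeasureSpace Ω] [IsProbabilityMeasure (ℙ : Measure Ω)]
    {Y : Fin 2 → Ω → ℝ} (hY : ∀ i, Measurable (Y i)) {α : Fin 2 → ℝ} (hα : ∀ i, 0 < α i)
    (hlaw : ∀ i t, (ℙ : Measure Ω).real {x | Y i x ≤ t} = F (α i) t) :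
    (ℙ : Measure (Fin 2 → Ω)).real {ω | Y 1 (ω 1) < Y 0 (ω 0)} = α 0 / (α 0 + α 1) := by
  have hindep : iIndepFun (fun i (ω : Fin 2 → Ω) => Y i (ω i)) ℙ := by
    rw [volume_pi]; exact iIndepFun_pi fun i => (hY i).aemeasurable
  have hwin := hmax 2 le_rfl α hα _ _ (fun i => (hY i).comp (measurable_pi_apply i)) hindep
    fun i t => (measureReal_pi_eval_preimage i (measurableSet_le (hY i) measurable_const)).trans
      (hlaw i t)
  rw [measureReal_def]
  simpa [Fin.forall_fin_two, Fin.sum_univ_two] using hwin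

theorem multiplicative_noise_sign_general
    (F : ℝ → ℝ → ℝ)
    (hmax : MaxCompatible F)
    (f : ℝ → ℝ) (hf : ∀ α : ℝ, 0 < α → f α ≠ 0)
    {Ω : Type} [MeasureSpace Ω] [IsProbabilityMeasure (ℙ : Measure Ω)]
    (G : Ω → ℝ) (hG : Measurable G)
    (hnoise : ∀ α : ℝ, 0 < α → ∀ t,
      ((ℙ : Measure Ω) {ω | f α * G ω ≤ t}).toReal = F α t) :
    min ((ℙ : Measure Ω) {ω | 0 < G ω}).toReal
        ((ℙ : Measure Ω) {ω | G ω < 0}).toReal = 0 := by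
  set m := min ((ℙ : Measure Ω) {ω | 0 < G ω}).toReal ((ℙ : Measure Ω) {ω | G ω < 0}).toReal
  by_contra hne
  have hm : 0 < m := (le_min measureReal_nonneg measureReal_nonneg).lt_of_ne' hne
  have hα : ∀ i, 0 < ![m ^ 2, 1] i := by
    intro i; fin_cases i <;> simp [hm]
  have hwin := hmax.measureReal_pi_lt (fun i => measurable_const.mul hG) hα
    fun i => hnoise _ (hα i)
  have hlower := min_measureReal_sign_sq_le_measureReal_pi_lt hG (hf _ (hα 0)) (hf _ (hα 1))
  have hupper : m ^ 2 / (m ^ 2 + 1) < m ^ 2 :=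
    div_lt_self (by positivity) (by linarith [sq_pos_of_pos hm])
  exact hupper.not_ge (hlower.trans_eq hwin)

/-- In a max-compatible family with multiplicative noise `X α ~ f(α) · G`, the
noise `G` must be either a.s. positive or a.s. negative:
`min (P(G > 0), P(G < 0)) = 0`. -/
theorem multiplicative_noise_sign
    (F : ℝ → ℝ → ℝ)
    (hcont : ∀ α : ℝ, 0 < α → Continuous (F α))
    (hmax : MaxCompatible F)
    (f : ℝ → ℝ) (hf : ∀ α : ℝ, 0 < α → f α ≠ 0)
    {Ω : Type} [MeasureSpace Ω] [IsProbabilityMeasure (ℙ : Measure Ω)]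
    (G : Ω → ℝ) (hG : Measurable G)
    (hGcont : Continuous fun t => ((ℙ : Measure Ω) {ω | G ω ≤ t}).toReal)
    (hnoise : ∀ α : ℝ, 0 < α → ∀ t,
      ((ℙ : Measure Ω) {ω | f α * G ω ≤ t}).toReal = F α t) :
    min ((ℙ : Measure Ω) {ω | 0 < G ω}).toReal
        ((ℙ : Measure Ω) {ω | G ω < 0}).toReal = 0 :=
  multiplicative_noise_sign_general F hmax f hf G hG hnoise
end
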